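/- arXiv:2008.13042 — 2 statements merged into one kernel-verified Lean document; each statement's English description precedes it below -/
import Mathlib

section
/- For k ≥ 2, the integral IL = ∫_{-∞}^{∞} exp{½ [vec(R₀)' Σ₀^{-1/2} N_{Σ₀^{-1/2}(a_Δ⊗I_k)} Σ₀^{-1/2} vec(R₀) − t't]} · det[(a_Δ'⊗I_k)Σ₀^{-1}(a_Δ⊗I_k)]^{-1/2} · |Δ|^{k-2} dΔ is finite for every fixed R₀ ∈ ℝ^{k×2}, t ∈ ℝᵏ, and positive definite 2k×2k matrix Σ₀. -/
open Matrix Kronecker MeasureTheory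

/-- Orthogonal projection onto the column space of a full-column-rank matrix. -/
noncomputable def projMat {m n : Type*} [Fintype m] [Fintype n] [DecidableEq n]
    (A : Matrix m n ℝ) : Matrix m m ℝ :=
  A * (Aᵀ * A)⁻¹ * Aᵀ

/-- `vec` of a `k×2` matrix, stacking columns. -/
def vecCol {k : ℕ} (r : Matrix (Fin k) (Fin 2) ℝ) : Fin 2 × Fin k → ℝ :=
  fun p => r p.2 p.1

/-- `a_Δ ⊗ I_k`, where `a_Δ = (Δ,1)'`. -/
def aKron (k : ℕ) (Δ : ℝ) : Matrix (Fin 2 × Fin k) (Fin 1 × Fin k) ℝ :=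
  (of ![![Δ], ![1]] : Matrix (Fin 2) (Fin 1) ℝ) ⊗ₖ (1 : Matrix (Fin k) (Fin k) ℝ)

/-!
In the Loewner order `Σ₀⁻¹ ≥ r • 1` for some `r > 0`, and `a_Δ ⊗ I_k` has Gram matrix
`(1 + Δ²) • 1`; hence `(a_Δ ⊗ I_k)ᵀ Σ₀⁻¹ (a_Δ ⊗ I_k) ≥ r (1 + Δ²) • 1` and its determinant is at
least `(r (1 + Δ²))ᵏ`. The projection term `w ⬝ᵥ N w` is at most `w ⬝ᵥ w` since `1 - N ≥ 0` for
every orthogonal projection `N`. So the integrand is at most a constant times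
`|Δ|^(k-2) (1 + Δ²)^(-k/2) ≤ (1 + Δ²)⁻¹`.
-/

open scoped MatrixOrder ComplexOrder

section

variable {n : Type*} [Fintype n]

theorem Matrix.conjTranspose_mul_mul_le_of_le {𝕜 m : Type*} [RCLike 𝕜] [Fintype m]
    {A B : Matrix n n 𝕜} (h : A ≤ B) (C : Matrix n m 𝕜) : Cᴴ * A * C ≤ Cᴴ * B * C := by
  rw [Matrix.le_iff, ← Matrix.sub_mul, ← Matrix.mul_sub]
  exact (Matrix.le_iff.1 h).conjTranspose_mul_mul_same C

variable [DecidableEq n]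

theorem Matrix.PosDef.exists_pos_algebraMap_le [Nonempty n] {M : Matrix n n ℝ} (hM : M.PosDef) :
    ∃ r > 0, algebraMap ℝ (Matrix n n ℝ) r ≤ M :=
  (CFC.exists_pos_algebraMap_le_iff hM.isHermitian.isSelfAdjoint).2 fun _ hx =>
    hM.isStrictlyPositive.spectrum_pos hx

theorem Matrix.pow_card_le_det_of_algebraMap_le {M : Matrix n n ℝ} {c : ℝ} (hc : 0 ≤ c)
    (h : algebraMap ℝ (Matrix n n ℝ) c ≤ M) : c ^ Fintype.card n ≤ M.det := by
  have hM : M.IsHermitian := by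
    simpa using (Matrix.le_iff.1 h).isHermitian.add
      (IsSelfAdjoint.algebraMap (Matrix n n ℝ) (IsSelfAdjoint.all c))
  have hspec := (algebraMap_le_iff_le_spectrum (a := M) hM.isSelfAdjoint).1 h
  rw [hM.det_eq_prod_eigenvalues, ← Finset.card_univ, ← Finset.prod_const]
  exact Finset.prod_le_prod (fun _ _ => hc) fun i _ => by
    simpa using hspec _ (hM.eigenvalues_mem_spectrum_real i)

end

section

variable {m n : Type*} [Fintype m] [Fintype n] [DecidableEq n]

/- When `Bᵀ * B` is singular the inverse is the junk value `0`, so `projMat B = 0`, which is still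
a star projection. -/
theorem isStarProjection_projMat (B : Matrix m n ℝ) : IsStarProjection (projMat B) := by
  by_cases hB : IsUnit (Bᵀ * B).det
  · refine ⟨?_, ?_⟩
    · calc projMat B * projMat B = B * ((Bᵀ * B)⁻¹ * (Bᵀ * B)) * (Bᵀ * B)⁻¹ * Bᵀ := by
            simp only [projMat, Matrix.mul_assoc]
        _ = projMat B := by rw [nonsing_inv_mul _ hB, Matrix.mul_one, projMat]
    · simp [IsSelfAdjoint, projMat, Matrix.star_eq_conjTranspose, transpose_nonsing_inv,
        Matrix.mul_assoc]
  · simp [projMat, nonsing_inv_apply_not_isUnit _ hB, IsStarProjection.zero]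

theorem dotProduct_projMat_mulVec_le [DecidableEq m] (B : Matrix m n ℝ) (v : m → ℝ) :
    v ⬝ᵥ (projMat B *ᵥ v) ≤ v ⬝ᵥ v := by
  have h : (1 - projMat B).PosSemidef := (isStarProjection_projMat B).one_sub.nonneg.posSemidef
  simpa [sub_mulVec, dotProduct_sub] using h.dotProduct_mulVec_nonneg v

variable {α : Type*} [TopologicalSpace α] [MeasurableSpace α] [OpensMeasurableSpace α]
  {B : α → Matrix m n ℝ}

/- `projMat ∘ B` need not be continuous, since the inverse jumps to `0` where `Bᵀ * B` becomes
singular; but `A⁻¹ = (det A)⁻¹ • adjugate A` and `x ↦ x⁻¹` is measurable on `ℝ`. -/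
theorem measurable_projMat_apply (hB : Continuous B) (i j : m) :
    Measurable fun x => projMat (B x) i j := by
  simp only [projMat, mul_apply, inv_def, Ring.inverse_eq_inv', Matrix.smul_apply, smul_eq_mul,
    transpose_apply]
  have hG : Continuous fun x => (B x)ᵀ * B x := hB.matrix_transpose.matrix_mul hB
  refine Finset.measurable_sum _ fun a _ => (Finset.measurable_sum _ fun b _ => ?_).mul ?_
  · exact (hB.matrix_elem i b).measurable.mul
      ((hG.matrix_det.measurable.inv).mul (hG.matrix_adjugate.matrix_elem b a).measurable)
  · exact (hB.matrix_elem j a).measurable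

theorem measurable_dotProduct_projMat_mulVec (hB : Continuous B) (v : m → ℝ) :
    Measurable fun x => v ⬝ᵥ (projMat (B x) *ᵥ v) :=
  Finset.measurable_sum _ fun i _ => measurable_const.mul <|
    Finset.measurable_sum _ fun j _ => (measurable_projMat_apply hB i j).mul measurable_const

end

section

variable (k : ℕ)

theorem continuous_aKron : Continuous (aKron k) := by
  refine continuous_matrix fun ⟨i, _⟩ ⟨_, _⟩ => ?_
  fin_cases i <;> simp [aKron] <;> fun_prop

theorem aKron_transpose_mul_self (Δ : ℝ) :
    (aKron k Δ)ᵀ * aKron k Δ = (1 + Δ ^ 2) • (1 : Matrix (Fin 1 × Fin k) (Fin 1 × Fin k) ℝ) := by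
  have ha : (of ![![Δ], ![1]] : Matrix (Fin 2) (Fin 1) ℝ)ᵀ * of ![![Δ], ![1]] =
      (1 + Δ ^ 2) • (1 : Matrix (Fin 1) (Fin 1) ℝ) := by
    ext i j
    fin_cases i; fin_cases j
    simp [mul_apply, Fin.sum_univ_two]
    ring
  rw [aKron, ← kroneckerMap_transpose, transpose_one, ← mul_kronecker_mul, Matrix.one_mul, ha,
    smul_kronecker, one_kronecker_one]

theorem pow_le_det_aKron_transpose_mul_mul {M : Matrix (Fin 2 × Fin k) (Fin 2 × Fin k) ℝ}
    {r : ℝ} (hr : 0 ≤ r) (hM : algebraMap ℝ _ r ≤ M) (Δ : ℝ) :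
    (r * (1 + Δ ^ 2)) ^ k ≤ ((aKron k Δ)ᵀ * M * aKron k Δ).det := by
  have h := Matrix.conjTranspose_mul_mul_le_of_le hM (aKron k Δ)
  rw [conjTranspose_eq_transpose_of_trivial, Algebra.algebraMap_eq_smul_one, Matrix.mul_smul,
    Matrix.mul_one, Matrix.smul_mul, aKron_transpose_mul_self, smul_smul,
    ← Algebra.algebraMap_eq_smul_one] at h
  simpa using Matrix.pow_card_le_det_of_algebraMap_le (by positivity) h

end

theorem abs_pow_sub_two_mul_rpow_le {k : ℕ} (hk : 2 ≤ k) (x : ℝ) :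
    |x| ^ (k - 2) * ((1 + x ^ 2) ^ k) ^ (-(1 / 2) : ℝ) ≤ (1 + x ^ 2)⁻¹ := by
  set s := √(1 + x ^ 2)
  have hs : 0 < s := Real.sqrt_pos.2 (by positivity)
  have hsq : s ^ 2 = 1 + x ^ 2 := Real.sq_sqrt (by positivity)
  have hrpow : ((1 + x ^ 2) ^ k) ^ (-(1 / 2) : ℝ) = (s ^ k)⁻¹ := by
    rw [Real.rpow_neg (by positivity), ← Real.sqrt_eq_rpow, ← hsq, ← pow_mul, mul_comm,
      pow_mul, Real.sqrt_sq (by positivity)]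
  have hx : |x| ≤ s := Real.abs_le_sqrt (by linarith)
  calc |x| ^ (k - 2) * ((1 + x ^ 2) ^ k) ^ (-(1 / 2) : ℝ)
      ≤ s ^ (k - 2) * (s ^ k)⁻¹ := by
        rw [hrpow]; gcongr
    _ = (1 + x ^ 2)⁻¹ := by
        rw [← hsq, ← pow_sub_mul_pow s hk]; field_simp

theorem IL_integrable_general (k : ℕ) (hk : 2 ≤ k)
    (R₀ : Matrix (Fin k) (Fin 2) ℝ) (t : Fin k → ℝ)
    (Sig ShInv : Matrix (Fin 2 × Fin k) (Fin 2 × Fin k) ℝ)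
    (hSig : Sig.PosDef) :
    Integrable (fun Δ : ℝ =>
      Real.exp ((1/2) * (((ShInv *ᵥ vecCol R₀) ⬝ᵥ
          (projMat (ShInv * aKron k Δ) *ᵥ (ShInv *ᵥ vecCol R₀))) - t ⬝ᵥ t))
      * ((aKron k Δ)ᵀ * Sig⁻¹ * aKron k Δ).det ^ (-(1/2) : ℝ)
      * |Δ| ^ (k - 2)) := by
  have : NeZero k := ⟨by omega⟩
  obtain ⟨r, hr, hrSig⟩ := hSig.inv.exists_pos_algebraMap_le
  set v := ShInv *ᵥ vecCol R₀
  set E := Real.exp ((1 / 2) * (v ⬝ᵥ v - t ⬝ᵥ t))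
  have hdet (Δ : ℝ) := pow_le_det_aKron_transpose_mul_mul k hr.le hrSig Δ
  have hA := continuous_aKron k
  refine Integrable.mono' (integrable_inv_one_add_sq.const_mul (E * (r ^ k) ^ (-(1 / 2) : ℝ)))
    (Measurable.aestronglyMeasurable ?_) (ae_of_all _ fun Δ => ?_)
  · refine ((((measurable_dotProduct_projMat_mulVec (continuous_const.matrix_mul hA) v).sub_const
      _).const_mul _).exp.mul ?_).mul (continuous_abs.pow _).measurable
    exact ((hA.matrix_transpose.matrix_mul continuous_const).matrix_mul
      hA).matrix_det.measurable.pow_const _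
  have hpos : 0 < (r * (1 + Δ ^ 2)) ^ k := by positivity
  have hdetpos := hpos.trans_le (hdet Δ)
  rw [Real.norm_of_nonneg (by positivity)]
  calc _ ≤ E * ((r * (1 + Δ ^ 2)) ^ k) ^ (-(1 / 2) : ℝ) * |Δ| ^ (k - 2) := by
        gcongr ?_ * ?_ * _
        · exact Real.exp_le_exp.2 (by gcongr; exact dotProduct_projMat_mulVec_le _ v)
        · exact Real.rpow_le_rpow_of_nonpos hpos (hdet Δ) (by norm_num)
    _ = E * (r ^ k) ^ (-(1 / 2) : ℝ) * (|Δ| ^ (k - 2) * ((1 + Δ ^ 2) ^ k) ^ (-(1 / 2) : ℝ)) := by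
        rw [mul_pow, Real.mul_rpow (by positivity) (by positivity)]; ring
    _ ≤ _ := by gcongr; exact abs_pow_sub_two_mul_rpow_le hk Δ

/-- For `k ≥ 2`, the integrand of the `IL` statistic is integrable over `Δ ∈ ℝ`:
the integral
`∫ exp{½[vec(R₀)'Σ₀^{-1/2} N_{Σ₀^{-1/2}(a_Δ⊗I_k)} Σ₀^{-1/2} vec(R₀) − t't]}
  · det[(a_Δ'⊗I_k)Σ₀⁻¹(a_Δ⊗I_k)]^{-1/2} · |Δ|^{k-2} dΔ` is finite. -/
theorem IL_integrable (k : ℕ) (hk : 2 ≤ k)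
    (R₀ : Matrix (Fin k) (Fin 2) ℝ) (t : Fin k → ℝ)
    (Sig ShInv : Matrix (Fin 2 × Fin k) (Fin 2 × Fin k) ℝ)
    (hSig : Sig.PosDef) (hShSym : ShInv.IsSymm) (hShInv : ShInv * ShInv = Sig⁻¹) :
    Integrable (fun Δ : ℝ =>
      Real.exp ((1/2) * (((ShInv *ᵥ vecCol R₀) ⬝ᵥ
          (projMat (ShInv * aKron k Δ) *ᵥ (ShInv *ᵥ vecCol R₀))) - t ⬝ᵥ t))
      * ((aKron k Δ)ᵀ * Sig⁻¹ * aKron k Δ).det ^ (-(1/2) : ℝ)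
      * |Δ| ^ (k - 2)) :=
  IL_integrable_general k hk R₀ t Sig ShInv hSig
end

section
/- The LR statistic LR = max_a vec(R)'Σ^{-1/2} N_{Σ^{-1/2}(a⊗I_k)} Σ^{-1/2} vec(R) − T'T, with maximization over a = (β,1)', β ∈ ℝ, equals b₀'R'[(b₀'⊗I_k)Σ(b₀⊗I_k)]^{-1}Rb₀ − min_b b'R'[(b'⊗I_k)Σ(b⊗I_k)]^{-1}Rb, where the minimum is over b = (1,−β)', β ∈ ℝ, and b₀ = (1,−β₀)'. -/
open Matrix Kronecker MeasureTheory

/-- `a ⊗ I_k` for a 2-vector `a`, as a `2k × k` matrix. -/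
def colKron (k : ℕ) (a : Fin 2 → ℝ) : Matrix (Fin 2 × Fin k) (Fin k) ℝ :=
  Matrix.of fun p i => a p.1 * (1 : Matrix (Fin k) (Fin k) ℝ) p.2 i

/-- `c' ⊗ I_k` for a 2-vector `c`, as a `k × 2k` matrix. -/
def rowKron (k : ℕ) (c : Fin 2 → ℝ) : Matrix (Fin k) (Fin 2 × Fin k) ℝ :=
  Matrix.of fun i p => c p.1 * (1 : Matrix (Fin k) (Fin k) ℝ) p.2 i

/-!
With `A = a ⊗ I_k`, `B = b ⊗ I_k`, `a = (β,1)'`, `b = (1,-β)'`, one has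
`Σ⁻¹ = Σ⁻¹A(A'Σ⁻¹A)⁻¹A'Σ⁻¹ + B(B'ΣB)⁻¹B'`: the difference `Z` of the two sides is symmetric and
kills `A` and `ΣB`; as the columns of `A` and `B` are orthogonal and together span, `c Z = BB'Z`
for some `c ≠ 0`, so `Z'ΣZ = 0` and `Z = 0`.
Evaluated at `vec(R)`, this makes the term of the supremum at `β`, and `T'T` (at `β₀`), equal to
the constant `vec(R)'Σ⁻¹vec(R)` minus the `b`-term at that point; the constant cancels, and the
supremum of the constant minus the `b`-term is the constant minus its infimum.
-/

theorem Real.ciSup_const_sub {ι : Sort*} [Nonempty ι] (C : ℝ) {f : ι → ℝ}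
    (hf : BddBelow (Set.range f)) : ⨆ i, C - f i = C - ⨅ i, f i :=
  (Antitone.map_ciInf_of_continuousAt (continuous_sub_left C).continuousAt
    (fun _ _ h => sub_le_sub_left h C) hf).symm

namespace Matrix

variable {m n p : Type*} [Fintype m] [Fintype n] [Fintype p]

theorem dotProduct_mulVec_conj (M : Matrix m n ℝ) (P : Matrix m m ℝ) (v : n → ℝ) :
    (M *ᵥ v) ⬝ᵥ (P *ᵥ (M *ᵥ v)) = v ⬝ᵥ ((Mᵀ * P * M) *ᵥ v) := by
  rw [← mulVec_mulVec, ← mulVec_mulVec, dotProduct_mulVec v, vecMul_transpose]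

variable [DecidableEq n]

theorem PosDef.eq_zero_of_transpose_mul_mul_self_eq_zero {Sig : Matrix m m ℝ}
    (hSig : Sig.PosDef) {Z : Matrix m n ℝ} (hZ : Zᵀ * Sig * Z = 0) : Z = 0 := by
  have hcol : ∀ x, Z *ᵥ x = 0 := fun x => by
    by_contra hx
    have hpos := hSig.dotProduct_mulVec_pos hx
    rw [star_trivial, dotProduct_mulVec_conj, hZ, zero_mulVec, dotProduct_zero] at hpos
    exact hpos.false
  ext i j
  simpa using congrFun (hcol (Pi.single j 1)) i

theorem PosDef.inv_eq_add_of_transpose_mul_eq_zero [DecidableEq m] [DecidableEq p]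
    {Sig : Matrix m m ℝ} (hSig : Sig.PosDef) {A : Matrix m n ℝ} {B : Matrix m p ℝ}
    (hA : Function.Injective A.mulVec) (hB : Function.Injective B.mulVec) (hAB : Aᵀ * B = 0)
    {c : ℝ} (hc : c ≠ 0) (hspan : A * Aᵀ + B * Bᵀ = c • 1) :
    Sig⁻¹ = Sig⁻¹ * A * (Aᵀ * Sig⁻¹ * A)⁻¹ * (Aᵀ * Sig⁻¹) + B * (Bᵀ * Sig * B)⁻¹ * Bᵀ := by
  have hSA : (Aᵀ * Sig⁻¹ * A).PosDef := by
    simpa using hSig.inv.conjTranspose_mul_mul_same hA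
  have hSB : (Bᵀ * Sig * B).PosDef := by
    simpa using hSig.conjTranspose_mul_mul_same hB
  set W := (Aᵀ * Sig⁻¹ * A)⁻¹
  set V := (Bᵀ * Sig * B)⁻¹
  have hSigInv : Sig⁻¹ * Sig = 1 := nonsing_inv_mul _ ((isUnit_iff_isUnit_det _).mp hSig.isUnit)
  have hWA : W * (Aᵀ * Sig⁻¹ * A) = 1 :=
    nonsing_inv_mul _ ((isUnit_iff_isUnit_det _).mp hSA.isUnit)
  have hVB : V * (Bᵀ * Sig * B) = 1 :=
    nonsing_inv_mul _ ((isUnit_iff_isUnit_det _).mp hSB.isUnit)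
  have hSiT : (Sig⁻¹)ᵀ = Sig⁻¹ := (isHermitian_iff_isSymm.mp hSig.inv.isHermitian).eq
  have hWT : Wᵀ = W := (isHermitian_iff_isSymm.mp hSA.inv.isHermitian).eq
  have hVT : Vᵀ = V := (isHermitian_iff_isSymm.mp hSB.inv.isHermitian).eq
  have hBA : Bᵀ * A = 0 := by simpa using congrArg (·ᵀ) hAB
  set Z := Sig⁻¹ - Sig⁻¹ * A * W * (Aᵀ * Sig⁻¹) - B * V * Bᵀ with hZ
  have hZA : Z * A = 0 := calc
    Z * A = Sig⁻¹ * A - Sig⁻¹ * A * (W * (Aᵀ * Sig⁻¹ * A)) - B * V * (Bᵀ * A) := by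
      simp only [hZ, Matrix.sub_mul, Matrix.mul_assoc]
    _ = 0 := by rw [hWA, hBA]; simp
  have hZSB : Z * (Sig * B) = 0 := calc
    Z * (Sig * B) = Sig⁻¹ * Sig * B - Sig⁻¹ * A * W * (Aᵀ * (Sig⁻¹ * Sig) * B)
        - B * (V * (Bᵀ * Sig * B)) := by
      simp only [hZ, Matrix.sub_mul, Matrix.mul_assoc]
    _ = 0 := by rw [hSigInv, hVB, Matrix.mul_one, hAB]; simp
  have hZT : Zᵀ = Z := by
    simp only [hZ, transpose_sub, transpose_mul, transpose_transpose, hSiT, hWT, hVT,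
      Matrix.mul_assoc]
  have hAZ : Aᵀ * Z = 0 := by simpa [hZT] using congrArg (·ᵀ) hZA
  have hcZ : c • Z = B * Bᵀ * Z := calc
    c • Z = (A * Aᵀ + B * Bᵀ) * Z := by rw [hspan, smul_mul, Matrix.one_mul]
    _ = B * Bᵀ * Z := by rw [Matrix.add_mul, Matrix.mul_assoc A, hAZ, Matrix.mul_zero, zero_add]
  have hZSZ : Zᵀ * Sig * Z = 0 := by
    refine (smul_eq_zero.mp ?_).resolve_left hc
    calc c • (Zᵀ * Sig * Z) = Zᵀ * (Sig * B) * Bᵀ * Z := by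
          rw [← Matrix.mul_smul, hcZ]; simp only [Matrix.mul_assoc]
      _ = 0 := by rw [hZT, hZSB]; simp
  have hZ0 := hSig.eq_zero_of_transpose_mul_mul_self_eq_zero hZSZ
  rwa [hZ, sub_sub, sub_eq_zero] at hZ0

theorem dotProduct_projMat_mul_mulVec {Q S : Matrix m m ℝ} (hS : S.IsSymm) (hSS : S * S = Q)
    (A : Matrix m n ℝ) (r : m → ℝ) :
    (S *ᵥ r) ⬝ᵥ (projMat (S * A) *ᵥ (S *ᵥ r))
      = r ⬝ᵥ ((Q * A * (Aᵀ * Q * A)⁻¹ * (Aᵀ * Q)) *ᵥ r) := by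
  have hSAT : (S * A)ᵀ = Aᵀ * S := by rw [transpose_mul, hS.eq]
  rw [dotProduct_mulVec_conj, projMat, hSAT, hS.eq]
  congr 2
  simp only [Matrix.mul_assoc]
  rw [← Matrix.mul_assoc S S, hSS, ← Matrix.mul_assoc S S, hSS, ← Matrix.mul_assoc Aᵀ Q A]

theorem dotProduct_self_mulVec_of_mul_self_eq_inv {Q : Matrix m m ℝ} (hQ : Q.IsSymm)
    (A : Matrix m n ℝ) {D : Matrix n n ℝ} (hD : D.IsSymm) (hDD : D * D = (Aᵀ * Q * A)⁻¹)
    (r : m → ℝ) :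
    (D *ᵥ ((Aᵀ * Q) *ᵥ r)) ⬝ᵥ (D *ᵥ ((Aᵀ * Q) *ᵥ r))
      = r ⬝ᵥ ((Q * A * (Aᵀ * Q * A)⁻¹ * (Aᵀ * Q)) *ᵥ r) := by
  calc _ = ((D * (Aᵀ * Q)) *ᵥ r) ⬝ᵥ (1 *ᵥ ((D * (Aᵀ * Q)) *ᵥ r)) := by
        rw [one_mulVec, mulVec_mulVec]
    _ = _ := by
      rw [dotProduct_mulVec_conj, ← hDD]
      simp only [transpose_mul, transpose_transpose, hQ.eq, hD.eq, Matrix.mul_one,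
        Matrix.mul_assoc]

end Matrix

open Matrix

section Kronecker

variable {k : ℕ}

theorem transpose_colKron (a : Fin 2 → ℝ) : (colKron k a)ᵀ = rowKron k a := by
  ext i p
  simp [rowKron, colKron]

theorem transpose_colKron_mul_colKron (a b : Fin 2 → ℝ) :
    (colKron k a)ᵀ * colKron k b = (a ⬝ᵥ b) • (1 : Matrix (Fin k) (Fin k) ℝ) := by
  ext i j
  simp only [colKron, mul_apply, Fintype.sum_prod_type, one_apply, dotProduct, transpose_apply,
    Matrix.smul_apply, of_apply, smul_eq_mul]
  rcases eq_or_ne i j with h | h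
  · simp [h]
  · simp [h, Ne.symm h]

theorem colKron_mul_transpose_add_colKron_mul_transpose (x y : ℝ) :
    colKron k ![x, y] * (colKron k ![x, y])ᵀ + colKron k ![y, -x] * (colKron k ![y, -x])ᵀ
      = (x ^ 2 + y ^ 2) • (1 : Matrix (Fin 2 × Fin k) (Fin 2 × Fin k) ℝ) := by
  ext ⟨i, n⟩ ⟨j, m⟩
  simp only [colKron, mul_apply, one_apply, Prod.ext_iff, Matrix.add_apply, transpose_apply,
    Matrix.smul_apply, of_apply, smul_eq_mul]
  rcases eq_or_ne n m with h | h <;> fin_cases i <;> fin_cases j <;> simp [h] <;> ring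

theorem injective_mulVec_colKron {a : Fin 2 → ℝ} (ha : a ≠ 0) :
    Function.Injective (colKron k a).mulVec := by
  intro x y hxy
  have h := congrArg ((colKron k a)ᵀ *ᵥ ·) hxy
  simp only [mulVec_mulVec, transpose_colKron_mul_colKron, smul_mulVec, one_mulVec] at h
  exact smul_right_injective _ (dotProduct_self_eq_zero.not.mpr ha) h

theorem Matrix.PosDef.transpose_colKron_mul_mul_colKron
    {Sig : Matrix (Fin 2 × Fin k) (Fin 2 × Fin k) ℝ} (hSig : Sig.PosDef)
    {a : Fin 2 → ℝ} (ha : a ≠ 0) :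
    ((colKron k a)ᵀ * Sig * colKron k a).PosDef := by
  simpa using hSig.conjTranspose_mul_mul_same (injective_mulVec_colKron ha)

theorem Matrix.PosDef.dotProduct_inv_mulVec_eq_add
    {Sig : Matrix (Fin 2 × Fin k) (Fin 2 × Fin k) ℝ} (hSig : Sig.PosDef) (β : ℝ)
    (r : Fin 2 × Fin k → ℝ) :
    r ⬝ᵥ (Sig⁻¹ *ᵥ r)
      = r ⬝ᵥ ((Sig⁻¹ * colKron k ![β, 1] * ((colKron k ![β, 1])ᵀ * Sig⁻¹ * colKron k ![β, 1])⁻¹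
          * ((colKron k ![β, 1])ᵀ * Sig⁻¹)) *ᵥ r)
        + (rowKron k ![1, -β] *ᵥ r) ⬝ᵥ
          ((rowKron k ![1, -β] * Sig * (rowKron k ![1, -β])ᵀ)⁻¹ *ᵥ (rowKron k ![1, -β] *ᵥ r)) := by
  have hAB : (colKron k ![β, 1])ᵀ * colKron k ![1, -β] = 0 := by
    simp [transpose_colKron_mul_colKron, dotProduct, Fin.sum_univ_two]
  have hsplit := hSig.inv_eq_add_of_transpose_mul_eq_zero (injective_mulVec_colKron (by simp))
    (injective_mulVec_colKron (by simp)) hAB (by positivity)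
    (colKron_mul_transpose_add_colKron_mul_transpose β 1)
  rw [← transpose_colKron, transpose_transpose, dotProduct_mulVec_conj, transpose_transpose,
    ← dotProduct_add, ← add_mulVec, ← hsplit]

end Kronecker

theorem LR_moment_representation_general (k : ℕ) (β₀ : ℝ)
    (R : Matrix (Fin k) (Fin 2) ℝ)
    (Sig ShInv : Matrix (Fin 2 × Fin k) (Fin 2 × Fin k) ℝ)
    (hSig : Sig.PosDef) (hShSym : ShInv.IsSymm) (hShInv : ShInv * ShInv = Sig⁻¹)
    (Dhalf : Matrix (Fin k) (Fin k) ℝ) (hDsym : Dhalf.IsSymm)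
    (hD : Dhalf * Dhalf = (rowKron k ![β₀, 1] * Sig⁻¹ * (rowKron k ![β₀, 1])ᵀ)⁻¹)
    (T : Fin k → ℝ)
    (hT : T = Dhalf *ᵥ ((rowKron k ![β₀, 1] * Sig⁻¹) *ᵥ vecCol R)) :
    (⨆ β : ℝ, (ShInv *ᵥ vecCol R) ⬝ᵥ
        (projMat (ShInv * colKron k ![β, 1]) *ᵥ (ShInv *ᵥ vecCol R))) - T ⬝ᵥ T
      = (rowKron k ![1, -β₀] *ᵥ vecCol R) ⬝ᵥ
          ((rowKron k ![1, -β₀] * Sig * (rowKron k ![1, -β₀])ᵀ)⁻¹ *ᵥ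
            (rowKron k ![1, -β₀] *ᵥ vecCol R))
        - ⨅ β : ℝ, (rowKron k ![1, -β] *ᵥ vecCol R) ⬝ᵥ
            ((rowKron k ![1, -β] * Sig * (rowKron k ![1, -β])ᵀ)⁻¹ *ᵥ
              (rowKron k ![1, -β] *ᵥ vecCol R)) := by
  set r := vecCol R
  set G : ℝ → ℝ := fun β => (rowKron k ![1, -β] *ᵥ r) ⬝ᵥ
    ((rowKron k ![1, -β] * Sig * (rowKron k ![1, -β])ᵀ)⁻¹ *ᵥ (rowKron k ![1, -β] *ᵥ r))
  have hG : ∀ β, 0 ≤ G β := fun β => by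
    have hPD := hSig.transpose_colKron_mul_mul_colKron (k := k) (a := ![1, -β]) (by simp)
    simp only [G, ← transpose_colKron, transpose_transpose]
    simpa using hPD.inv.posSemidef.dotProduct_mulVec_nonneg ((colKron k ![1, -β])ᵀ *ᵥ r)
  have hLR : ∀ β, (ShInv *ᵥ r) ⬝ᵥ (projMat (ShInv * colKron k ![β, 1]) *ᵥ (ShInv *ᵥ r))
      = r ⬝ᵥ (Sig⁻¹ *ᵥ r) - G β := fun β => by
    rw [dotProduct_projMat_mul_mulVec hShSym hShInv, hSig.dotProduct_inv_mulVec_eq_add β r,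
      add_sub_cancel_right]
  have hTT : T ⬝ᵥ T = r ⬝ᵥ (Sig⁻¹ *ᵥ r) - G β₀ := by
    rw [← transpose_colKron, transpose_transpose] at hD
    rw [← transpose_colKron] at hT
    rw [hT, dotProduct_self_mulVec_of_mul_self_eq_inv
      (isHermitian_iff_isSymm.mp hSig.inv.isHermitian) _ hDsym hD,
      hSig.dotProduct_inv_mulVec_eq_add β₀ r, add_sub_cancel_right]
  rw [iSup_congr hLR, hTT, Real.ciSup_const_sub _ ⟨0, Set.forall_mem_range.mpr hG⟩]
  ring

/-- The `LR` statistic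
`max_a vec(R)'Σ^{-1/2} N_{Σ^{-1/2}(a⊗I_k)} Σ^{-1/2} vec(R) − T'T` (over `a = (β,1)'`) equals
`b₀'R'[(b₀'⊗I_k)Σ(b₀⊗I_k)]⁻¹Rb₀ − min_b b'R'[(b'⊗I_k)Σ(b⊗I_k)]⁻¹Rb` (over `b = (1,−β)'`). -/
theorem LR_moment_representation (k : ℕ) (hk : 1 ≤ k) (β₀ : ℝ)
    (R : Matrix (Fin k) (Fin 2) ℝ)
    (Sig ShInv : Matrix (Fin 2 × Fin k) (Fin 2 × Fin k) ℝ)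
    (hSig : Sig.PosDef) (hShSym : ShInv.IsSymm) (hShInv : ShInv * ShInv = Sig⁻¹)
    (Dhalf : Matrix (Fin k) (Fin k) ℝ) (hDsym : Dhalf.IsSymm)
    (hD : Dhalf * Dhalf = (rowKron k ![β₀, 1] * Sig⁻¹ * (rowKron k ![β₀, 1])ᵀ)⁻¹)
    (T : Fin k → ℝ)
    (hT : T = Dhalf *ᵥ ((rowKron k ![β₀, 1] * Sig⁻¹) *ᵥ vecCol R)) :
    (⨆ β : ℝ, (ShInv *ᵥ vecCol R) ⬝ᵥ
        (projMat (ShInv * colKron k ![β, 1]) *ᵥ (ShInv *ᵥ vecCol R))) - T ⬝ᵥ T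
      = (rowKron k ![1, -β₀] *ᵥ vecCol R) ⬝ᵥ
          ((rowKron k ![1, -β₀] * Sig * (rowKron k ![1, -β₀])ᵀ)⁻¹ *ᵥ
            (rowKron k ![1, -β₀] *ᵥ vecCol R))
        - ⨅ β : ℝ, (rowKron k ![1, -β] *ᵥ vecCol R) ⬝ᵥ
            ((rowKron k ![1, -β] * Sig * (rowKron k ![1, -β])ᵀ)⁻¹ *ᵥ
              (rowKron k ![1, -β] *ᵥ vecCol R)) :=
  LR_moment_representation_general k β₀ R Sig ShInv hSig hShSym hShInv Dhalf hDsym hD T hT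
end
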